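/- arXiv:math/0701223 — 2 statements merged into one kernel-verified Lean document; each statement's English description precedes it below -/
import Mathlib

section
/- Let C be a monoidal category and A = (A, m, η, Δ, ε) a Frobenius algebra in C that is special with normalization m ∘ Δ = id_A. Then the morphism P := (ρ_r ⊗ ρ_l) ∘ (id_X ⊗ (Δ ∘ η) ⊗ id_Y) ∈ End(X ⊗ Y) is an idempotent, for any right A-module (X, ρ_r) and left A-module (Y, ρ_l) in C. -/
set_option maxHeartbeats 3200000


open CategoryTheory MonoidalCategory

/-- for a special Frobenius algebra `A` (with `m ∘ Δ = id_A`) in a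
monoidal category `C`, and a right `A`-module `(X, ρr)` and left `A`-module
`(Y, ρl)`, the morphism `P = (ρr ⊗ ρl) ∘ (id_X ⊗ (Δ ∘ η) ⊗ id_Y)` is an
idempotent in `End(X ⊗ Y)`. -/
theorem stmt_8 {C : Type*} [Category C] [MonoidalCategory C]
    (A : C) (m : A ⊗ A ⟶ A) (η : 𝟙_ C ⟶ A) (Δ : A ⟶ A ⊗ A) (ε : A ⟶ 𝟙_ C)
    (hassoc : (α_ A A A).hom ≫ (A ◁ m) ≫ m = (m ▷ A) ≫ m)
    (hunitl : (λ_ A).inv ≫ (η ▷ A) ≫ m = 𝟙 A)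
    (hunitr : (ρ_ A).inv ≫ (A ◁ η) ≫ m = 𝟙 A)
    (hcoassoc : Δ ≫ (Δ ▷ A) ≫ (α_ A A A).hom = Δ ≫ (A ◁ Δ))
    (hcounitl : Δ ≫ (ε ▷ A) ≫ (λ_ A).hom = 𝟙 A)
    (hcounitr : Δ ≫ (A ◁ ε) ≫ (ρ_ A).hom = 𝟙 A)
    (hfrob1 : (Δ ▷ A) ≫ (α_ A A A).hom ≫ (A ◁ m) = m ≫ Δ)
    (hfrob2 : (A ◁ Δ) ≫ (α_ A A A).inv ≫ (m ▷ A) = m ≫ Δ)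
    (hspecial : Δ ≫ m = 𝟙 A)
    (X Y : C) (ρr : X ⊗ A ⟶ X) (ρl : A ⊗ Y ⟶ Y)
    (hXunit : (ρ_ X).inv ≫ (X ◁ η) ≫ ρr = 𝟙 X)
    (hXassoc : (α_ X A A).hom ≫ (X ◁ m) ≫ ρr = (ρr ▷ A) ≫ ρr)
    (hYunit : (λ_ Y).inv ≫ (η ▷ Y) ≫ ρl = 𝟙 Y)
    (hYassoc : (α_ A A Y).inv ≫ (m ▷ Y) ≫ ρl = (A ◁ ρl) ≫ ρl)
    (P : X ⊗ Y ⟶ X ⊗ Y)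
    (hP : P = ((ρ_ X).inv ▷ Y) ≫ ((X ◁ (η ≫ Δ)) ▷ Y) ≫ ((α_ X A A).inv ▷ Y)
            ≫ (α_ (X ⊗ A) A Y).hom ≫ (ρr ⊗ₘ ρl)) :
    P ≫ P = P := by
  have ins_pastW : X ◁ ρl ≫ X ◁ (λ_ Y).inv ≫ X ◁ (η ▷ Y) ≫ X ◁ (Δ ▷ Y) =
      X ◁ (λ_ (A⊗Y)).inv ≫ X ◁ (η ▷ (A⊗Y)) ≫ X ◁ (Δ ▷ (A⊗Y)) ≫ X ◁ ((A⊗A) ◁ ρl) := by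
    simp only [← MonoidalCategory.whiskerLeft_comp]
    rw [leftUnitor_inv_naturality_assoc, whisker_exchange_assoc, whisker_exchange]
  have mv1 : X ◁ A ◁ A ◁ ρl ≫ (α_ X A (A⊗Y)).inv ≫ (α_ (X⊗A) A Y).inv ≫ (ρr ▷ A ▷ Y)
      ≫ (α_ X A Y).hom ≫ X ◁ ρl
    = (α_ X A (A⊗(A⊗Y))).inv ≫ (α_ (X⊗A) A (A⊗Y)).inv ≫ (ρr ▷ A ▷ (A⊗Y))
      ≫ (α_ X A (A⊗Y)).hom ≫ X ◁ ((A ◁ ρl) ≫ ρl) := by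
    rw [MonoidalCategory.whiskerLeft_comp, associator_inv_naturality_right_assoc,
      associator_inv_naturality_right_assoc, whisker_exchange_assoc,
      ← associator_naturality_right_assoc]
  have mv2 : ρr ▷ A ▷ Y ≫ (α_ X A Y).hom ≫ X ◁ (λ_ (A⊗Y)).inv ≫ X ◁ (α_ (𝟙_ C) A Y).inv
      ≫ X ◁ (η ▷ A ▷ Y) ≫ X ◁ (Δ ▷ A ▷ Y) ≫ (α_ X ((A⊗A)⊗A) Y).inv
      ≫ ((α_ X (A⊗A) A).inv ▷ Y) ≫ ((α_ X A A).inv ▷ A ▷ Y) ≫ (ρr ▷ A ▷ A ▷ Y)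
    =
    (α_ (X⊗A) A Y).hom ≫ (X⊗A) ◁ (λ_ (A⊗Y)).inv ≫ (X⊗A) ◁ (α_ (𝟙_ C) A Y).inv
      ≫ (X⊗A) ◁ (η ▷ A ▷ Y) ≫ (X⊗A) ◁ (Δ ▷ A ▷ Y) ≫ (α_ (X⊗A) ((A⊗A)⊗A) Y).inv
      ≫ ((α_ (X⊗A) (A⊗A) A).inv ▷ Y) ≫ ((α_ (X⊗A) A A).inv ▷ A ▷ Y)
      ≫ (((ρr ▷ A) ≫ ρr) ▷ A ▷ A ▷ Y) := by
    rw [associator_naturality_left_assoc, ← whisker_exchange_assoc,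
        ← whisker_exchange_assoc, ← whisker_exchange_assoc, ← whisker_exchange_assoc,
        associator_inv_naturality_left_assoc]
    slice_lhs 7 8 => rw [← comp_whiskerRight, associator_inv_naturality_left, comp_whiskerRight]
    slice_lhs 8 9 => rw [← comp_whiskerRight, ← comp_whiskerRight,
      associator_inv_naturality_left, comp_whiskerRight, comp_whiskerRight]
    simp only [comp_whiskerRight, Category.assoc]
  have EL1X : X ◁ A ◁ (λ_ (A ⊗ Y)).inv ≫ X ◁ A ◁ (α_ (𝟙_ C) A Y).inv
      ≫ X ◁ A ◁ (η ▷ A ▷ Y) ≫ X ◁ A ◁ (Δ ▷ A ▷ Y)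
      ≫ (α_ X A (((A⊗A)⊗A)⊗Y)).inv ≫ (α_ (X⊗A) ((A⊗A)⊗A) Y).inv
      ≫ ((α_ (X⊗A) (A⊗A) A).inv ▷ Y) ≫ ((α_ (X⊗A) A A).inv ▷ A ▷ Y)
      ≫ ((α_ X A A).hom ▷ A ▷ A ▷ Y) ≫ ((α_ X (A⊗A) A).hom ▷ A ▷ Y)
      ≫ ((α_ X ((A⊗A)⊗A) A).hom ▷ Y) ≫ (α_ X (((A⊗A)⊗A)⊗A) Y).hom
      ≫ (X ◁ (m ▷ A ▷ A ▷ Y))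
    = X ◁ (α_ A A Y).inv ≫ X ◁ (Δ ▷ A ▷ Y) := by
    have L0eq : (ρ_ A).inv ≫ A ◁ η ≫ A ◁ Δ ≫ (α_ A A A).inv ≫ (m ▷ A) = Δ := by
      rw [hfrob2]
      slice_lhs 1 3 => rw [hunitr]
      simp
    conv_rhs => rw [← L0eq]
    monoidal
  have mv3 : ρr ▷ A ▷ A ▷ Y ≫ ((α_ X A A).hom ▷ Y) ≫ (α_ X (A⊗A) Y).hom ≫ X ◁ (m ▷ Y)
    = ((α_ (X⊗A) A A).hom ▷ Y) ≫ (α_ (X⊗A) (A⊗A) Y).hom ≫ (X⊗A) ◁ (m ▷ Y)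
      ≫ ρr ▷ (A ⊗ Y) := by
    slice_lhs 1 2 => rw [← comp_whiskerRight, associator_naturality_left, comp_whiskerRight]
    simp only [Category.assoc]
    rw [associator_naturality_left_assoc, ← whisker_exchange]
  have alg : η ≫ Δ ≫ (Δ ▷ A) ≫ (α_ A A A).hom ≫ (A ◁ m) = η ≫ Δ := by
    slice_lhs 2 4 => rw [hcoassoc]
    rw [Category.assoc, ← MonoidalCategory.whiskerLeft_comp, hspecial]
    simp
  have EL2X : X ◁ (η ▷ Y) ≫ X ◁ (Δ ▷ Y) ≫ X ◁ (Δ ▷ A ▷ Y)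
      ≫ (α_ X ((A⊗A)⊗A) Y).inv ≫ ((α_ X (A⊗A) A).inv ▷ Y) ≫ ((α_ X A A).inv ▷ A ▷ Y)
      ≫ ((α_ (X⊗A) A A).hom ▷ Y) ≫ (α_ (X⊗A) (A⊗A) Y).hom ≫ (X⊗A) ◁ (m ▷ Y)
    = X ◁ ((η ≫ Δ ≫ (Δ ▷ A) ≫ (α_ A A A).hom ≫ (A ◁ m)) ▷ Y)
      ≫ X ◁ (α_ A A Y).hom ≫ (α_ X A (A⊗Y)).inv := by
    monoidal
  rw [hP]
  simp [MonoidalCategory.tensorHom_def, whisker_exchange]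
  slice_lhs 8 11 => rw [ins_pastW]
  simp [whisker_exchange]
  slice_lhs 14 19 => rw [mv1, ← hYassoc]
  simp [whisker_exchange]
  slice_lhs 6 15 => rw [mv2, ← hXassoc]
  simp [whisker_exchange]
  slice_lhs 5 17 => rw [EL1X]
  simp [whisker_exchange]
  slice_lhs 8 11 => rw [mv3]
  slice_lhs 2 10 => rw [EL2X, alg]
  simp [whisker_exchange]
end

section
/- Let A be a symmetric special Frobenius algebra in a sovereign monoidal category C with ε ∘ η = dim(A)·id_1, dim(A) ≠ 0. Then A is nondegenerate: the morphism [(ε_♮ ∘ m) ⊗ id_{A^∨}] ∘ (id_A ⊗ b_A) ∈ Hom(A, A^∨), with ε_♮ := d_A ∘ (id_{A^∨} ⊗ m) ∘ (b̃_A ⊗ id_A), is an isomorphism, with inverse (d_A ⊗ id_A) ∘ (id_{A^∨} ⊗ (Δ ∘ η)). -/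
/-! The Frobenius laws make `(η ≫ Δ, m ≫ ε)` an exact pairing of `A` with itself, so `A` and `Av`
are both right duals of `A`. The comparison isomorphism `rightDualIso` between them has `nondegInv`
as hom and, as inverse, `nondegMap` with `ε_♮` replaced by `ε`. It remains to see `ε_♮ = ε`:
symmetry says that the comparison carries `bt` to the Frobenius copairing `η ≫ Δ`, and then
`ε_♮ = ε ∘ m ∘ Δ = ε` by specialness. -/

open CategoryTheory MonoidalCategory

variable {C : Type*} [Category C] [MonoidalCategory C]

/-- The morphism `ε_♮ := d_A ∘ (id_{A^∨} ⊗ m) ∘ (b̃_A ⊗ id_A) : A ⟶ 𝟙`. -/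
def epsNat (A Av : C) (m : A ⊗ A ⟶ A)
    (d : Av ⊗ A ⟶ 𝟙_ C) (bt : 𝟙_ C ⟶ Av ⊗ A) : A ⟶ 𝟙_ C :=
  (λ_ A).inv ≫ (bt ▷ A) ≫ (α_ Av A A).hom ≫ (Av ◁ m) ≫ d

/-- The morphism `[(ε_♮ ∘ m) ⊗ id_{A^∨}] ∘ (id_A ⊗ b_A) : A ⟶ A^∨`. -/
def nondegMap (A Av : C) (m : A ⊗ A ⟶ A) (b : 𝟙_ C ⟶ A ⊗ Av)
    (d : Av ⊗ A ⟶ 𝟙_ C) (bt : 𝟙_ C ⟶ Av ⊗ A) : A ⟶ Av :=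
  (ρ_ A).inv ≫ (A ◁ b) ≫ (α_ A A Av).inv ≫ ((m ≫ epsNat A Av m d bt) ▷ Av) ≫
    (λ_ Av).hom

/-- The candidate inverse `(d_A ⊗ id_A) ∘ (id_{A^∨} ⊗ (Δ ∘ η)) : A^∨ ⟶ A`. -/
def nondegInv (A Av : C) (η : 𝟙_ C ⟶ A) (Δ : A ⟶ A ⊗ A)
    (d : Av ⊗ A ⟶ 𝟙_ C) : Av ⟶ A :=
  (ρ_ Av).inv ≫ (Av ◁ (η ≫ Δ)) ≫ (α_ Av A A).inv ≫ (d ▷ A) ≫ (λ_ A).hom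

namespace CategoryTheory

abbrev ExactPairing.ofZigzag {X Y : C} (coev : 𝟙_ C ⟶ X ⊗ Y) (ev : Y ⊗ X ⟶ 𝟙_ C)
    (h₁ : (λ_ X).inv ≫ coev ▷ X ≫ (α_ X Y X).hom ≫ X ◁ ev ≫ (ρ_ X).hom = 𝟙 X)
    (h₂ : (ρ_ Y).inv ≫ Y ◁ coev ≫ (α_ Y X Y).inv ≫ ev ▷ Y ≫ (λ_ Y).hom = 𝟙 Y) :
    ExactPairing X Y where
  coevaluation' := coev
  evaluation' := ev
  coevaluation_evaluation' := by
    rw [← cancel_epi (ρ_ Y).inv, ← cancel_mono (λ_ Y).hom]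
    simpa using h₂
  evaluation_coevaluation' := by
    rw [← cancel_epi (λ_ X).inv, ← cancel_mono (ρ_ X).hom]
    simpa using h₁

theorem rightDualIso_hom_eq {X Y₁ Y₂ : C} [p₁ : ExactPairing X Y₁] [p₂ : ExactPairing X Y₂] :
    (rightDualIso p₁ p₂).hom =
      (ρ_ Y₁).inv ≫ Y₁ ◁ η_ X Y₂ ≫ (α_ Y₁ X Y₂).inv ≫ ε_ X Y₁ ▷ Y₂ ≫ (λ_ Y₂).hom := by
  simp only [rightDualIso, rightAdjointMate, MonoidalCategory.whiskerLeft_id, id_whiskerRight,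
    Category.id_comp]

theorem rightDualIso_hom_whiskerRight_evaluation {X Y₁ Y₂ : C} [p₁ : ExactPairing X Y₁]
    [p₂ : ExactPairing X Y₂] :
    (rightDualIso p₁ p₂).hom ▷ X ≫ ε_ X Y₂ = ε_ X Y₁ := by
  have := @rightAdjointMate_comp_evaluation C _ _ X X ⟨Y₂⟩ ⟨Y₁⟩ (𝟙 X)
  rwa [MonoidalCategory.whiskerLeft_id, Category.id_comp] at this

theorem ExactPairing.coevaluation_comp_whiskerRight_eq {X Y W : C} [ExactPairing X Y]
    (c : 𝟙_ C ⟶ W ⊗ Y) :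
    η_ X Y ≫ ((λ_ X).inv ≫ c ▷ X ≫ (α_ W Y X).hom ≫ W ◁ ε_ X Y ≫ (ρ_ W).hom) ▷ Y = c :=
  calc _ = (ρ_ _).inv ≫ _ ◁ η_ X Y ≫ (α_ _ _ _).inv ≫
        (c ▷ X ≫ (α_ W Y X).hom ≫ W ◁ ε_ X Y ≫ (ρ_ W).hom) ▷ Y := by
        simp [unitors_equal]
    _ = c := (tensorRightHomEquiv (𝟙_ C) X Y W).right_inv c

theorem ExactPairing.comp_whiskerRight_eq_coevaluation {X Y W : C} [ExactPairing X Y]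
    (c : 𝟙_ C ⟶ W ⊗ Y) (g : W ⟶ X)
    (h : ((λ_ X).inv ≫ c ▷ X ≫ (α_ W Y X).hom ≫ W ◁ ε_ X Y ≫ (ρ_ W).hom) ≫ g = 𝟙 X) :
    c ≫ g ▷ Y = η_ X Y := by
  conv_lhs => rw [← coevaluation_comp_whiskerRight_eq (X := X) c]
  rw [Category.assoc, ← comp_whiskerRight, h, id_whiskerRight, Category.comp_id]

end CategoryTheory

namespace Frobenius

variable {A : C} {m : A ⊗ A ⟶ A} {η : 𝟙_ C ⟶ A} {Δ : A ⟶ A ⊗ A} {ε : A ⟶ 𝟙_ C}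

theorem unit_comul_whiskerRight_mul (hunitl : (λ_ A).inv ≫ (η ▷ A) ≫ m = 𝟙 A)
    (hfrob1 : (Δ ▷ A) ≫ (α_ A A A).hom ≫ (A ◁ m) = m ≫ Δ) :
    (λ_ A).inv ≫ (η ≫ Δ) ▷ A ≫ (α_ A A A).hom ≫ A ◁ m = Δ := by
  rw [comp_whiskerRight, Category.assoc, hfrob1, reassoc_of% hunitl]

theorem unit_comul_whiskerLeft_mul (hunitr : (ρ_ A).inv ≫ (A ◁ η) ≫ m = 𝟙 A)
    (hfrob2 : (A ◁ Δ) ≫ (α_ A A A).inv ≫ (m ▷ A) = m ≫ Δ) :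
    (ρ_ A).inv ≫ A ◁ (η ≫ Δ) ≫ (α_ A A A).inv ≫ m ▷ A = Δ := by
  rw [MonoidalCategory.whiskerLeft_comp, Category.assoc, hfrob2, reassoc_of% hunitr]

abbrev exactPairing (hunitl : (λ_ A).inv ≫ (η ▷ A) ≫ m = 𝟙 A)
    (hunitr : (ρ_ A).inv ≫ (A ◁ η) ≫ m = 𝟙 A)
    (hcounitl : Δ ≫ (ε ▷ A) ≫ (λ_ A).hom = 𝟙 A)
    (hcounitr : Δ ≫ (A ◁ ε) ≫ (ρ_ A).hom = 𝟙 A)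
    (hfrob1 : (Δ ▷ A) ≫ (α_ A A A).hom ≫ (A ◁ m) = m ≫ Δ)
    (hfrob2 : (A ◁ Δ) ≫ (α_ A A A).inv ≫ (m ▷ A) = m ≫ Δ) : ExactPairing A A :=
  .ofZigzag (η ≫ Δ) (m ≫ ε)
    (by simp only [MonoidalCategory.whiskerLeft_comp, Category.assoc]
        rw [reassoc_of% unit_comul_whiskerRight_mul hunitl hfrob1, hcounitr])
    (by simp only [comp_whiskerRight, Category.assoc]
        rw [reassoc_of% unit_comul_whiskerLeft_mul hunitr hfrob2, hcounitl])

theorem epsNat_eq_counit {Av : C} {d : Av ⊗ A ⟶ 𝟙_ C} {bt : 𝟙_ C ⟶ Av ⊗ A}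
    (hunitl : (λ_ A).inv ≫ (η ▷ A) ≫ m = 𝟙 A)
    (hfrob1 : (Δ ▷ A) ≫ (α_ A A A).hom ≫ (A ◁ m) = m ≫ Δ)
    (hspecial : Δ ≫ m = 𝟙 A) (ψ : Av ⟶ A) (hbt : bt ≫ ψ ▷ A = η ≫ Δ)
    (hd : ψ ▷ A ≫ m ≫ ε = d) :
    epsNat A Av m d bt = ε :=
  calc epsNat A Av m d bt
      = (λ_ A).inv ≫ (bt ≫ ψ ▷ A) ▷ A ≫ (α_ A A A).hom ≫ A ◁ m ≫ m ≫ ε := by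
        rw [epsNat, ← hd, whisker_exchange_assoc]
        monoidal
    _ = ε := by
        rw [hbt, reassoc_of% unit_comul_whiskerRight_mul hunitl hfrob1, reassoc_of% hspecial]

end Frobenius

theorem stmt_9_general
    (A Av : C) (m : A ⊗ A ⟶ A) (η : 𝟙_ C ⟶ A) (Δ : A ⟶ A ⊗ A) (ε : A ⟶ 𝟙_ C)
    -- right duality (b_A, d_A) and left duality (b̃_A, d̃_A) with the same dual
    -- object `Av` (sovereignty)
    (b : 𝟙_ C ⟶ A ⊗ Av) (d : Av ⊗ A ⟶ 𝟙_ C)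
    (bt : 𝟙_ C ⟶ Av ⊗ A)
    (hzig₁ : (λ_ A).inv ≫ (b ▷ A) ≫ (α_ A Av A).hom ≫ (A ◁ d) ≫ (ρ_ A).hom = 𝟙 A)
    (hzig₂ : (ρ_ Av).inv ≫ (Av ◁ b) ≫ (α_ Av A Av).inv ≫ (d ▷ Av) ≫ (λ_ Av).hom
        = 𝟙 Av)
    -- Frobenius algebra axioms
    (hunitl : (λ_ A).inv ≫ (η ▷ A) ≫ m = 𝟙 A)
    (hunitr : (ρ_ A).inv ≫ (A ◁ η) ≫ m = 𝟙 A)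
    (hcounitl : Δ ≫ (ε ▷ A) ≫ (λ_ A).hom = 𝟙 A)
    (hcounitr : Δ ≫ (A ◁ ε) ≫ (ρ_ A).hom = 𝟙 A)
    (hfrob1 : (Δ ▷ A) ≫ (α_ A A A).hom ≫ (A ◁ m) = m ≫ Δ)
    (hfrob2 : (A ◁ Δ) ≫ (α_ A A A).inv ≫ (m ▷ A) = m ≫ Δ)
    -- special, with normalization m ∘ Δ = id and ε ∘ η = dim(A)·id ≠ 0
    (hspecial : Δ ≫ m = 𝟙 A)
    -- symmetry: the canonical automorphism of A equals the identity
    (hsym : (λ_ A).inv ≫ (bt ▷ A) ≫ (α_ Av A A).hom ≫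
        (Av ◁ (m ≫ ε ≫ η ≫ Δ)) ≫ (α_ Av A A).inv ≫ (d ▷ A) ≫ (λ_ A).hom = 𝟙 A) :
    nondegMap A Av m b d bt ≫ nondegInv A Av η Δ d = 𝟙 A ∧
    nondegInv A Av η Δ d ≫ nondegMap A Av m b d bt = 𝟙 Av := by
  let p₁ : ExactPairing A Av := .ofZigzag b d hzig₁ hzig₂
  let p₂ : ExactPairing A A := Frobenius.exactPairing hunitl hunitr hcounitl hcounitr hfrob1 hfrob2
  let φ := rightDualIso p₁ p₂
  have hψ : nondegInv A Av η Δ d = φ.hom := (rightDualIso_hom_eq (p₁ := p₁) (p₂ := p₂)).symm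
  have hbt : bt ≫ φ.hom ▷ A = η ≫ Δ := by
    refine ExactPairing.comp_whiskerRight_eq_coevaluation bt _ ?_
    change ((λ_ A).inv ≫ bt ▷ A ≫ (α_ Av A A).hom ≫ Av ◁ (m ≫ ε) ≫ (ρ_ Av).hom) ≫ _ = 𝟙 A
    rw [← hψ, ← hsym, nondegInv]
    simp only [Category.assoc, Iso.hom_inv_id_assoc, MonoidalCategory.whiskerLeft_comp]
  have hε : epsNat A Av m d bt = ε :=
    Frobenius.epsNat_eq_counit hunitl hfrob1 hspecial _ hbt rightDualIso_hom_whiskerRight_evaluation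
  have hφ : nondegMap A Av m b d bt = φ.inv := by
    rw [nondegMap, hε]
    exact (rightDualIso_hom_eq (p₁ := p₂) (p₂ := p₁)).symm
  rw [hψ, hφ]
  exact ⟨φ.inv_hom_id, φ.hom_inv_id⟩

/-- a symmetric special Frobenius algebra `A` in a sovereign monoidal
category is nondegenerate: `[(ε_♮ ∘ m) ⊗ id_{A^∨}] ∘ (id_A ⊗ b_A) : A ⟶ A^∨` is an
isomorphism with inverse `(d_A ⊗ id_A) ∘ (id_{A^∨} ⊗ (Δ ∘ η))`. -/
theorem stmt_9 [Preadditive C]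
    (A Av : C) (m : A ⊗ A ⟶ A) (η : 𝟙_ C ⟶ A) (Δ : A ⟶ A ⊗ A) (ε : A ⟶ 𝟙_ C)
    -- right duality (b_A, d_A) and left duality (b̃_A, d̃_A) with the same dual
    -- object `Av` (sovereignty)
    (b : 𝟙_ C ⟶ A ⊗ Av) (d : Av ⊗ A ⟶ 𝟙_ C)
    (bt : 𝟙_ C ⟶ Av ⊗ A) (dt : A ⊗ Av ⟶ 𝟙_ C)
    (hzig₁ : (λ_ A).inv ≫ (b ▷ A) ≫ (α_ A Av A).hom ≫ (A ◁ d) ≫ (ρ_ A).hom = 𝟙 A)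
    (hzig₂ : (ρ_ Av).inv ≫ (Av ◁ b) ≫ (α_ Av A Av).inv ≫ (d ▷ Av) ≫ (λ_ Av).hom
        = 𝟙 Av)
    (hzig₃ : (ρ_ A).inv ≫ (A ◁ bt) ≫ (α_ A Av A).inv ≫ (dt ▷ A) ≫ (λ_ A).hom = 𝟙 A)
    (hzig₄ : (λ_ Av).inv ≫ (bt ▷ Av) ≫ (α_ Av A Av).hom ≫ (Av ◁ dt) ≫ (ρ_ Av).hom
        = 𝟙 Av)
    -- Frobenius algebra axioms
    (hassoc : (α_ A A A).hom ≫ (A ◁ m) ≫ m = (m ▷ A) ≫ m)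
    (hunitl : (λ_ A).inv ≫ (η ▷ A) ≫ m = 𝟙 A)
    (hunitr : (ρ_ A).inv ≫ (A ◁ η) ≫ m = 𝟙 A)
    (hcoassoc : Δ ≫ (Δ ▷ A) ≫ (α_ A A A).hom = Δ ≫ (A ◁ Δ))
    (hcounitl : Δ ≫ (ε ▷ A) ≫ (λ_ A).hom = 𝟙 A)
    (hcounitr : Δ ≫ (A ◁ ε) ≫ (ρ_ A).hom = 𝟙 A)
    (hfrob1 : (Δ ▷ A) ≫ (α_ A A A).hom ≫ (A ◁ m) = m ≫ Δ)
    (hfrob2 : (A ◁ Δ) ≫ (α_ A A A).inv ≫ (m ▷ A) = m ≫ Δ)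
    -- special, with normalization m ∘ Δ = id and ε ∘ η = dim(A)·id ≠ 0
    (hspecial : Δ ≫ m = 𝟙 A)
    (hdim : η ≫ ε ≠ 0)
    -- symmetry: the canonical automorphism of A equals the identity
    (hsym : (λ_ A).inv ≫ (bt ▷ A) ≫ (α_ Av A A).hom ≫
        (Av ◁ (m ≫ ε ≫ η ≫ Δ)) ≫ (α_ Av A A).inv ≫ (d ▷ A) ≫ (λ_ A).hom = 𝟙 A) :
    nondegMap A Av m b d bt ≫ nondegInv A Av η Δ d = 𝟙 A ∧
    nondegInv A Av η Δ d ≫ nondegMap A Av m b d bt = 𝟙 Av :=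
  stmt_9_general A Av m η Δ ε b d bt hzig₁ hzig₂ hunitl hunitr hcounitl hcounitr hfrob1 hfrob2
    hspecial hsym
end
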